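/- For p, q > 1 and r ∈ (0,1), Δ_{p,q}(r) = ((1−1/p)π_{p,q}/(2(1+1/q−1/p)))·[F(1/q, 1−1/p; 2+1/q−1/p; r^p) − F(1/q, 1−1/p; 2+1/q−1/p; 1−r^p)], where Δ_{p,q}(r) = (E_{p,q}(r) − (r')^p K_{p,q}(r))/r^p − (E_{p,q}(r') − r^p K_{p,q}(r'))/(r')^p with r' = (1−r^p)^{1/p}. -/

import Mathlib

open Real Set Filter Topology

/-- Gaussian hypergeometric function `F(a,b;c;z)` as a power series. -/
noncomputable def hypF (a b c z : ℝ) : ℝ :=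
  ∑' n : ℕ, ((ascPochhammer ℝ n).eval a * (ascPochhammer ℝ n).eval b /
    ((ascPochhammer ℝ n).eval c * (n.factorial : ℝ))) * z ^ n

/-- Generalized π: `π_{p,q} = (2/q) B(1-1/p, 1/q)` with `B(x,y) = Γ(x)Γ(y)/Γ(x+y)`. -/
noncomputable def piGen (p q : ℝ) : ℝ :=
  (2 / q) * (Real.Gamma (1 - 1/p) * Real.Gamma (1/q) / Real.Gamma (1 - 1/p + 1/q))

/-- Generalized complete (p,q)-elliptic integral of the first kind. -/
noncomputable def Kgen (p q r : ℝ) : ℝ :=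
  (piGen p q / 2) * hypF (1/q) (1 - 1/p) (1 - 1/p + 1/q) (r ^ p)

/-- Generalized complete (p,q)-elliptic integral of the second kind. -/
noncomputable def Egen (p q r : ℝ) : ℝ :=
  (piGen p q / 2) * hypF (1/q) (-(1/p)) (1 - 1/p + 1/q) (r ^ p)

/-- The function `Δ_{p,q}` with `r' = (1-r^p)^{1/p}`. -/
noncomputable def DeltaGen (p q r : ℝ) : ℝ :=
  (Egen p q r - ((1 - r ^ p) ^ (1/p)) ^ p * Kgen p q r) / r ^ p -
  (Egen p q ((1 - r ^ p) ^ (1/p)) - r ^ p * Kgen p q ((1 - r ^ p) ^ (1/p))) /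
    ((1 - r ^ p) ^ (1/p)) ^ p

/-!
Both `E_{p,q}` and `K_{p,q}` are hypergeometric in `x = r^p` with `a = 1/q`, `b = 1 - 1/p`,
`c = a + b`, and the contiguous relation
`F(a, b-1; a+b; x) - (1-x) F(a, b; a+b; x) = (b/(a+b)) x F(a, b; a+b+1; x)`
turns each of the two quotients defining `Δ_{p,q}` into a single hypergeometric value, at `r^p`
and at `r'^p = 1 - r^p` respectively. The relation is checked coefficientwise; convergence for
`|x| < 1` comes from the radius of convergence of Mathlib's `ordinaryHypergeometricSeries`.
-/

lemma hypF_eq_tsum (a b c z : ℝ) :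
    hypF a b c z = ∑' n : ℕ, ordinaryHypergeometricCoefficient a b c n * z ^ n :=
  tsum_congr fun n => by rw [div_eq_mul_inv, mul_inv]; ring

lemma one_le_radius_ordinaryHypergeometricSeries (a b c : ℝ) :
    1 ≤ (ordinaryHypergeometricSeries ℝ a b c).radius := by
  by_cases habc : ∃ k : ℕ, (k : ℝ) = -a ∨ (k : ℝ) = -b ∨ (k : ℝ) = -c
  · -- the coefficients vanish from index `k + 1` on (for `c`, through `0⁻¹ = 0`)
    obtain ⟨k, hk⟩ := habc
    rw [FormalMultilinearSeries.radius_eq_top_of_forall_image_add_eq_zero _ (k + 1)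
      fun m => ordinaryHypergeometricSeries_eq_zero_of_neg_nat a b c hk (by omega)]
    exact le_top
  · push Not at habc
    rw [ordinaryHypergeometricSeries_radius_eq_one ℝ a b c habc]

lemma summable_ordinaryHypergeometricCoefficient_mul_pow (a b c : ℝ) {x : ℝ} (hx : |x| < 1) :
    Summable fun n : ℕ => ordinaryHypergeometricCoefficient a b c n * x ^ n := by
  have hx' : x ∈ Metric.eball (0 : ℝ) (ordinaryHypergeometricSeries ℝ a b c).radius := by
    refine mem_eball_zero_iff.mpr
      (lt_of_lt_of_le ?_ (one_le_radius_ordinaryHypergeometricSeries a b c))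
    simpa [← ofReal_norm] using hx
  simpa only [ordinaryHypergeometricSeries_apply_eq, smul_eq_mul] using
    (ordinaryHypergeometricSeries ℝ a b c).summable hx'

lemma ascPochhammer_succ_eval_left (n : ℕ) (t : ℝ) :
    (ascPochhammer ℝ (n + 1)).eval t = t * (ascPochhammer ℝ n).eval (t + 1) := by
  rw [ascPochhammer_succ_left, Polynomial.eval_mul, Polynomial.eval_comp]
  simp

lemma ordinaryHypergeometricCoefficient_contiguous {a b : ℝ} (hab : ∀ n : ℕ, a + b + n ≠ 0)
    (n : ℕ) :
    ordinaryHypergeometricCoefficient a (b - 1) (a + b) (n + 1)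
        - ordinaryHypergeometricCoefficient a b (a + b) (n + 1)
        + ordinaryHypergeometricCoefficient a b (a + b) n
      = b / (a + b) * ordinaryHypergeometricCoefficient a b (a + b + 1) n := by
  have hc : a + b ≠ 0 := by simpa using hab 0
  have hcn : ((ascPochhammer ℝ n).eval (a + b)) ≠ 0 :=
    (ascPochhammer_eval_eq_zero_iff n _).not.mpr fun ⟨k, _, hk⟩ => hab k (by linarith)
  have hshift : (ascPochhammer ℝ n).eval (a + b + 1)
      = (ascPochhammer ℝ n).eval (a + b) * (a + b + n) / (a + b) := by
    rw [eq_div_iff hc, ← ascPochhammer_succ_eval, ascPochhammer_succ_eval_left]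
    ring
  have hsub : (ascPochhammer ℝ (n + 1)).eval (b - 1) = (b - 1) * (ascPochhammer ℝ n).eval b := by
    rw [ascPochhammer_succ_eval_left, sub_add_cancel]
  have habn := hab n
  simp only [ordinaryHypergeometricCoefficient, hshift, hsub, ascPochhammer_succ_eval,
    Nat.factorial_succ, Nat.cast_mul, Nat.cast_succ]
  field_simp
  ring

theorem hypF_contiguous {a b x : ℝ} (hab : ∀ n : ℕ, a + b + n ≠ 0) (hx : |x| < 1) :
    hypF a (b - 1) (a + b) x - (1 - x) * hypF a b (a + b) x
      = x * (b / (a + b)) * hypF a b (a + b + 1) x := by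
  set E := ordinaryHypergeometricCoefficient a (b - 1) (a + b)
  set K := ordinaryHypergeometricCoefficient a b (a + b)
  set U := ordinaryHypergeometricCoefficient a b (a + b + 1)
  have hE := (summable_ordinaryHypergeometricCoefficient_mul_pow a (b - 1) (a + b) hx).hasSum
  have hK := (summable_ordinaryHypergeometricCoefficient_mul_pow a b (a + b) hx).hasSum
  have hU := (summable_ordinaryHypergeometricCoefficient_mul_pow a b (a + b + 1) hx).hasSum
  -- both series start with `1`, so their difference is a multiple of `x`
  have hdiff : HasSum (fun n => (E (n + 1) - K (n + 1)) * x ^ (n + 1))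
      (∑' n, E n * x ^ n - ∑' n, K n * x ^ n) := by
    simpa [E, K, sub_mul, ordinaryHypergeometricCoefficient] using
      (hasSum_nat_add_iff' 1).mpr (hE.sub hK)
  have hlhs : HasSum (fun n => (E (n + 1) - K (n + 1)) * x ^ (n + 1) + x * (K n * x ^ n))
      (∑' n, E n * x ^ n - (1 - x) * ∑' n, K n * x ^ n) := by
    convert hdiff.add (hK.mul_left x) using 1
    ring
  have hrhs : HasSum (fun n => (E (n + 1) - K (n + 1)) * x ^ (n + 1) + x * (K n * x ^ n))
      (x * (b / (a + b)) * ∑' n, U n * x ^ n) := by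
    refine (hU.mul_left (x * (b / (a + b)))).congr_fun fun n => ?_
    linear_combination x ^ (n + 1) * ordinaryHypergeometricCoefficient_contiguous hab n
  rw [hypF_eq_tsum, hypF_eq_tsum, hypF_eq_tsum]
  exact hlhs.unique hrhs

lemma Egen_sub_mul_Kgen {p q s : ℝ} (hpq : ∀ n : ℕ, 1 - 1/p + 1/q + n ≠ 0) (hs : |s ^ p| < 1) :
    Egen p q s - (1 - s ^ p) * Kgen p q s
      = piGen p q / 2 * ((1 - 1/p) / (1 - 1/p + 1/q)) * s ^ p *
          hypF (1/q) (1 - 1/p) (2 + 1/q - 1/p) (s ^ p) := by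
  have h := hypF_contiguous (a := 1/q) (b := 1 - 1/p) (fun n => by convert hpq n using 1; ring) hs
  rw [show (1:ℝ) - 1/p - 1 = -(1/p) by ring, show (1:ℝ)/q + (1 - 1/p) = 1 - 1/p + 1/q by ring,
    show (1:ℝ) - 1/p + 1/q + 1 = 2 + 1/q - 1/p by ring] at h
  unfold Egen Kgen
  linear_combination piGen p q / 2 * h

theorem stmt7 (p q r : ℝ) (hp : 1 < p) (hq : 1 < q) (hr : r ∈ Set.Ioo (0:ℝ) 1) :
    DeltaGen p q r =
      ((1 - 1/p) * piGen p q / (2 * (1 + 1/q - 1/p))) *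
        (hypF (1/q) (1 - 1/p) (2 + 1/q - 1/p) (r ^ p) -
          hypF (1/q) (1 - 1/p) (2 + 1/q - 1/p) (1 - r ^ p)) := by
  obtain ⟨hr0, hr1⟩ := hr
  have hp0 : 0 < p := by linarith
  have hx0 : 0 < r ^ p := rpow_pos_of_pos hr0 p
  have hx1 : r ^ p < 1 := rpow_lt_one hr0.le hr1 hp0
  have hpq : ∀ n : ℕ, 1 - 1/p + 1/q + n ≠ 0 := fun n => by
    have h1p : 1/p < 1 := (div_lt_one hp0).mpr hp
    have h1q : 0 < 1/q := by positivity
    have hn : (0:ℝ) ≤ n := n.cast_nonneg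
    exact (by linarith : (0:ℝ) < 1 - 1/p + 1/q + n).ne'
  have hr' : ((1 - r ^ p) ^ (1/p)) ^ p = 1 - r ^ p := by
    rw [← rpow_mul (by linarith), one_div_mul_cancel hp0.ne', rpow_one]
  have h₁ := Egen_sub_mul_Kgen hpq (s := r) (by rw [abs_lt]; constructor <;> linarith)
  have h₂ := Egen_sub_mul_Kgen hpq (s := (1 - r ^ p) ^ (1/p))
    (by rw [hr', abs_lt]; constructor <;> linarith)
  rw [hr', sub_sub_cancel] at h₂
  have hc : 1 - 1/p + 1/q ≠ 0 := by simpa using hpq 0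
  rw [DeltaGen, hr', h₁, h₂]
  generalize hypF (1/q) (1 - 1/p) (2 + 1/q - 1/p) (r ^ p) = F₁
  generalize hypF (1/q) (1 - 1/p) (2 + 1/q - 1/p) (1 - r ^ p) = F₂
  rw [show 1 + 1/q - 1/p = 1 - 1/p + 1/q by ring]
  field_simp [hx0.ne', (sub_pos.mpr hx1).ne']
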